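/- arXiv:2404.10950 — 2 statements merged into one kernel-verified Lean document; each statement's English description precedes it below -/
import Mathlib

section
/- Let α ∈ (1,∞), let p_X be a strictly positive probability distribution on 𝒳 and p_{Y|X} a channel with p_{Y|X}(y|x) > 0 for all x, y. Then I_α^{LP} = sup over strictly positive reverse channels r_{X|Y} of ((2α−1)/(α−1)) · log Σ_x p_X(x)^{α/(2α−1)} ( Σ_y p_{Y|X}(y|x) r_{X|Y}(x|y)^{1−1/α} )^{α/(2α−1)}, and the supremum is attained. -/
/-- A probability mass function on a finite type. -/
def IsPMF {Z : Type*} [Fintype Z] (q : Z → ℝ) : Prop :=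
  (∀ z, 0 ≤ q z) ∧ ∑ z, q z = 1

/-- Rényi divergence of order `α`, valued in `EReal` (equal to `⊤` when `α > 1` and
`q` vanishes somewhere on the support of `p`). -/
noncomputable def renyiDE {Z : Type*} [Fintype Z] (α : ℝ) (p q : Z → ℝ) : EReal :=
  if 1 < α ∧ ∃ z, p z ≠ 0 ∧ q z = 0 then ⊤
  else (((1 / (α - 1)) * Real.log (∑ z, p z ^ α * q z ^ (1 - α)) : ℝ) : EReal)

/-- Lapidoth--Pfister mutual information of order `α`. -/
noncomputable def lpMI {X Y : Type*} [Fintype X] [Fintype Y]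
    (α : ℝ) (pX : X → ℝ) (pYX : X → Y → ℝ) : EReal :=
  sInf {v : EReal | ∃ qX : X → ℝ, ∃ qY : Y → ℝ, IsPMF qX ∧ IsPMF qY ∧
    v = renyiDE α (fun z : X × Y => pX z.1 * pYX z.1 z.2)
          (fun z : X × Y => qX z.1 * qY z.2)}

/-!
Write `F(qX, qY) = ∑ P(x,y)^α (qX(x) qY(y))^(1-α)` with `P = pX pYX`, so that
`I_α^LP = log (min F) / (α - 1)`; `F` blows up at the boundary of the simplices, so the minimum
is attained in the interior. Everything else is the reverse Hölder inequality
`(∑ a)^γ (∑ b)^(1-γ) ≤ ∑ a^γ b^(1-γ)` for `γ > 1`. Applied over `y` (with `a = P r^(1-1/α)`,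
`b = qY r`) and then over `x` (with `γ = 2α - 1`), it gives `T(r)^(2α-1) ≤ F(qX, qY)` for every
reverse channel `r`, where `T` is the sum inside the logarithm. Its equality case shows that the
minimiser satisfies `∑_y P^α qY^(1-α) = F qX^α` and `∑_x P^α qX^(1-α) = F qY^α`, and these two
equations make the tilted reverse channel `r(x|y) = P^α qX(x)^(1-α) / (F qY(y)^α)` attain
`T(r)^(2α-1) = F`.
-/

open Finset Real Filter Topology

def posSimplex (ι : Type*) [Fintype ι] : Set (ι → ℝ) :=
  {q | (∀ i, 0 < q i) ∧ ∑ i, q i = 1}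

lemma le_one_of_mem_posSimplex {ι : Type*} [Fintype ι] {q : ι → ℝ} (hq : q ∈ posSimplex ι)
    (i : ι) : q i ≤ 1 :=
  hq.2 ▸ single_le_sum (fun j _ => (hq.1 j).le) (mem_univ i)

lemma mul_div_rpow_eq_rpow_mul_rpow_one_sub {a b : ℝ} (ha : 0 ≤ a) (hb : 0 < b) (α : ℝ) :
    b * (a / b) ^ α = a ^ α * b ^ (1 - α) := by
  rw [div_rpow ha hb.le, rpow_sub hb, rpow_one]
  field_simp

section ReverseHolder

variable {ι : Type*} [Fintype ι] {α : ℝ} {a b : ι → ℝ}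

lemma sum_div_sum_smul_div (hb : ∀ i, 0 < b i) :
    ∑ i, (b i / ∑ j, b j) • (a i / b i) = (∑ i, a i) / ∑ i, b i := by
  rw [sum_div]
  refine sum_congr rfl fun i _ => ?_
  rw [smul_eq_mul]
  field_simp [(hb i).ne']

lemma sum_rpow_mul_rpow_one_sub_eq [Nonempty ι] (ha : ∀ i, 0 ≤ a i) (hb : ∀ i, 0 < b i) :
    ∑ i, a i ^ α * b i ^ (1 - α) = (∑ i, b i) * ∑ i, (b i / ∑ j, b j) • (a i / b i) ^ α := by
  have hB : 0 < ∑ i, b i := sum_pos (fun i _ => hb i) univ_nonempty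
  rw [mul_sum]
  refine sum_congr rfl fun i _ => ?_
  rw [smul_eq_mul, ← mul_assoc, mul_div_cancel₀ _ hB.ne',
    mul_div_rpow_eq_rpow_mul_rpow_one_sub (ha i) (hb i)]

/-- The reverse Hölder inequality; it is Jensen's inequality for `t ↦ t ^ α` with weights
`b i / ∑ b` at the points `a i / b i`. -/
lemma rpow_sum_mul_rpow_sum_le [Nonempty ι] (hα : 1 < α) (ha : ∀ i, 0 ≤ a i)
    (hb : ∀ i, 0 < b i) :
    (∑ i, a i) ^ α * (∑ i, b i) ^ (1 - α) ≤ ∑ i, a i ^ α * b i ^ (1 - α) := by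
  have hB : 0 < ∑ i, b i := sum_pos (fun i _ => hb i) univ_nonempty
  rw [← mul_div_rpow_eq_rpow_mul_rpow_one_sub (sum_nonneg fun i _ => ha i) hB,
    sum_rpow_mul_rpow_one_sub_eq ha hb, ← sum_div_sum_smul_div hb]
  gcongr
  exact (convexOn_rpow hα.le).map_sum_le (fun i _ => div_nonneg (hb i).le hB.le)
    (by rw [← sum_div, div_self hB.ne']) fun i _ => div_nonneg (ha i) (hb i).le

lemma eq_div_mul_of_sum_rpow_mul_rpow_le [Nonempty ι] (hα : 1 < α) (ha : ∀ i, 0 ≤ a i)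
    (hb : ∀ i, 0 < b i)
    (hle : ∑ i, a i ^ α * b i ^ (1 - α) ≤ (∑ i, a i) ^ α * (∑ i, b i) ^ (1 - α)) (i : ι) :
    a i = (∑ j, a j) / (∑ j, b j) * b i := by
  have hB : 0 < ∑ i, b i := sum_pos (fun i _ => hb i) univ_nonempty
  have heq := (rpow_sum_mul_rpow_sum_le hα ha hb).antisymm hle
  rw [← mul_div_rpow_eq_rpow_mul_rpow_one_sub (sum_nonneg fun i _ => ha i) hB,
    sum_rpow_mul_rpow_one_sub_eq ha hb, ← sum_div_sum_smul_div hb] at heq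
  have hi := ((strictConvexOn_rpow hα).map_sum_eq_iff (fun i _ => div_pos (hb i) hB)
    (by rw [← sum_div, div_self hB.ne']) fun i _ => div_nonneg (ha i) (hb i).le).1
    (mul_left_cancel₀ hB.ne' heq) i (mem_univ i)
  rw [sum_div_sum_smul_div hb, div_eq_iff (hb i).ne'] at hi
  exact hi

/-- Compare `w` with the point of the simplex proportional to `d ^ (1 / α)` and use the equality
case of the reverse Hölder inequality. -/
lemma eq_sum_mul_rpow_of_isMinOn [Nonempty ι] (hα : 1 < α) {d w : ι → ℝ} (hd : ∀ i, 0 < d i)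
    (hw : w ∈ posSimplex ι)
    (hmin : IsMinOn (fun v => ∑ i, v i ^ (1 - α) * d i) (posSimplex ι) w) (i : ι) :
    d i = (∑ j, w j ^ (1 - α) * d j) * w i ^ α := by
  set a : ι → ℝ := fun i => d i ^ α⁻¹
  have ha : ∀ i, 0 < a i := fun i => rpow_pos_of_pos (hd i) _
  have hda : ∀ i, d i = a i ^ α := fun i => (rpow_inv_rpow (hd i).le (by linarith)).symm
  set S := ∑ i, a i
  have hS : 0 < S := sum_pos (fun i _ => ha i) univ_nonempty
  have hmin_le : ∑ j, w j ^ (1 - α) * d j ≤ S ^ α := calc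
    _ ≤ ∑ j, (a j / S) ^ (1 - α) * d j :=
        hmin ⟨fun j => div_pos (ha j) hS, by rw [← sum_div, div_self hS.ne']⟩
    _ = ∑ j, S ^ α * (a j / S) := sum_congr rfl fun j _ => by
        rw [hda, mul_comm, ← mul_div_rpow_eq_rpow_mul_rpow_one_sub (ha j).le
          (div_pos (ha j) hS), div_div_cancel₀ (ha j).ne', mul_comm]
    _ = S ^ α := by rw [← mul_sum, ← sum_div, div_self hS.ne', mul_one]
  have hsum : ∑ j, w j ^ (1 - α) * d j = ∑ j, a j ^ α * w j ^ (1 - α) := by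
    simp only [hda, mul_comm]
  have hHolder : S ^ α * (∑ j, w j) ^ (1 - α) ≤ ∑ j, a j ^ α * w j ^ (1 - α) :=
    rpow_sum_mul_rpow_sum_le hα (fun j => (ha j).le) hw.1
  rw [hw.2, one_rpow, mul_one] at hHolder
  have hval : ∑ j, w j ^ (1 - α) * d j = S ^ α := hmin_le.antisymm (hsum ▸ hHolder)
  have hai := eq_div_mul_of_sum_rpow_mul_rpow_le hα (fun j => (ha j).le) hw.1
    (by rw [hw.2, one_rpow, mul_one, ← hsum, hval]) i
  rw [hw.2, div_one] at hai
  rw [hval, hda i, hai, mul_rpow hS.le (hw.1 i).le]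

lemma rpow_sum_mul_rpow_mul_rpow_sum_le [Nonempty ι] (hα : 1 < α) {c q ρ : ι → ℝ}
    (hc : ∀ i, 0 ≤ c i) (hq : ∀ i, 0 < q i) (hρ : ∀ i, 0 < ρ i) :
    (∑ i, c i * ρ i ^ (1 - 1 / α)) ^ α * (∑ i, q i * ρ i) ^ (1 - α)
      ≤ ∑ i, c i ^ α * q i ^ (1 - α) := by
  refine (rpow_sum_mul_rpow_sum_le hα (fun i => mul_nonneg (hc i) (rpow_nonneg (hρ i).le _))
    fun i => mul_pos (hq i) (hρ i)).trans_eq (sum_congr rfl fun i _ => ?_)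
  have hρρ : ρ i ^ ((1 - 1 / α) * α) * ρ i ^ (1 - α) = 1 := by
    rw [← rpow_add (hρ i), show (1 - 1 / α) * α + (1 - α) = 0 by field_simp; ring, rpow_zero]
  rw [mul_rpow (hc i) (rpow_nonneg (hρ i).le _), mul_rpow (hq i).le (hρ i).le,
    ← rpow_mul (hρ i).le]
  linear_combination (c i ^ α * q i ^ (1 - α)) * hρρ

lemma rpow_sum_rpow_le_sum_rpow_mul [Nonempty ι] (hα : 1 < α) {c w t : ι → ℝ} (hc : ∀ i, 0 ≤ c i)
    (hw : w ∈ posSimplex ι) (ht : t ∈ posSimplex ι) :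
    (∑ i, c i ^ (α / (2 * α - 1))) ^ (2 * α - 1)
      ≤ ∑ i, w i ^ (1 - α) * (c i ^ α * t i ^ (1 - α)) := by
  -- reverse Hölder with exponent `2α - 1` against `b = √(w t)`, and `∑ b ≤ 1` by AM-GM
  set b : ι → ℝ := fun i => w i ^ (1 / 2 : ℝ) * t i ^ (1 / 2 : ℝ)
  have hb : ∀ i, 0 < b i := fun i =>
    mul_pos (rpow_pos_of_pos (hw.1 i) _) (rpow_pos_of_pos (ht.1 i) _)
  have hb1 : ∑ i, b i ≤ 1 := calc
    ∑ i, b i ≤ ∑ i, (1 / 2 * w i + 1 / 2 * t i) := sum_le_sum fun i _ =>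
        geom_mean_le_arith_mean2_weighted (by norm_num) (by norm_num) (hw.1 i).le (ht.1 i).le
          (by norm_num)
    _ = 1 := by rw [sum_add_distrib, ← mul_sum, ← mul_sum, hw.2, ht.2]; norm_num
  have hH := rpow_sum_mul_rpow_sum_le (α := 2 * α - 1) (by linarith)
    (fun i => rpow_nonneg (hc i) (α / (2 * α - 1))) hb
  refine le_trans ?_ (hH.trans_eq (sum_congr rfl fun i _ => ?_))
  · refine le_mul_of_one_le_right (rpow_nonneg (sum_nonneg fun i _ => rpow_nonneg (hc i) _) _) ?_
    exact one_le_rpow_of_pos_of_le_one_of_nonpos (sum_pos (fun i _ => hb i) univ_nonempty) hb1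
      (by linarith)
  · have h2α : (2 * α - 1) ≠ 0 := by linarith
    rw [← rpow_mul (hc i), div_mul_cancel₀ _ h2α, mul_rpow (rpow_nonneg (hw.1 i).le _)
      (rpow_nonneg (ht.1 i).le _), ← rpow_mul (hw.1 i).le, ← rpow_mul (ht.1 i).le,
      show 1 / 2 * (1 - (2 * α - 1)) = 1 - α by ring]
    ring

end ReverseHolder

lemma IsCompact.exists_isMinOn_of_forall_le_of_notMem {E : Type*} [TopologicalSpace E]
    {s K : Set E} {f : E → ℝ} (hK : IsCompact K) (hKs : K ⊆ s) (hf : ContinuousOn f K)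
    {x₀ : E} (hx₀ : x₀ ∈ K) (hout : ∀ x ∈ s, x ∉ K → f x₀ ≤ f x) :
    ∃ x ∈ s, IsMinOn f s x := by
  obtain ⟨x, hxK, hmin⟩ := hK.exists_isMinOn ⟨x₀, hx₀⟩ hf
  refine ⟨x, hKs hxK, fun y hy => ?_⟩
  by_cases hyK : y ∈ K
  · exact hmin hyK
  · exact (hmin hx₀).trans (hout y hy hyK)

def truncatedSimplex (ι : Type*) [Fintype ι] (ε : ℝ) : Set (ι → ℝ) :=
  {q | ∀ i, ε ≤ q i} ∩ stdSimplex ℝ ι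

section TruncatedSimplex

variable {ι : Type*} [Fintype ι] {ε : ℝ}

lemma isCompact_truncatedSimplex (ι : Type*) [Fintype ι] (ε : ℝ) :
    IsCompact (truncatedSimplex ι ε) := by
  refine (isCompact_stdSimplex ℝ ι).inter_left ?_
  simp only [Set.ofPred_forall]
  exact isClosed_iInter fun i => isClosed_le continuous_const (continuous_apply i)

lemma truncatedSimplex_subset_posSimplex (hε : 0 < ε) : truncatedSimplex ι ε ⊆ posSimplex ι :=
  fun _ hq => ⟨fun i => hε.trans_le (hq.1 i), hq.2.2⟩

lemma const_inv_card_mem_truncatedSimplex [Nonempty ι] (hε : ε ≤ (Fintype.card ι : ℝ)⁻¹) :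
    (fun _ => (Fintype.card ι : ℝ)⁻¹) ∈ truncatedSimplex ι ε := by
  refine ⟨fun _ => hε, fun _ => by positivity, ?_⟩
  simp [sum_const, card_univ, nsmul_eq_mul]

lemma exists_lt_of_mem_posSimplex_of_notMem_truncatedSimplex {q : ι → ℝ}
    (hq : q ∈ posSimplex ι) (hqε : q ∉ truncatedSimplex ι ε) : ∃ i, q i < ε := by
  by_contra! h
  exact hqε ⟨h, fun i => (hq.1 i).le, hq.2⟩

end TruncatedSimplex

noncomputable def renyiSum {X Y : Type*} [Fintype X] [Fintype Y] (α : ℝ) (P : X → Y → ℝ)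
    (qX : X → ℝ) (qY : Y → ℝ) : ℝ :=
  ∑ x, ∑ y, P x y ^ α * (qX x * qY y) ^ (1 - α)

section RenyiSum

variable {X Y : Type*} [Fintype X] [Fintype Y] {α : ℝ} {P : X → Y → ℝ}

lemma continuousOn_renyiSum :
    ContinuousOn (fun q : (X → ℝ) × (Y → ℝ) => renyiSum α P q.1 q.2)
      {q | (∀ x, 0 < q.1 x) ∧ ∀ y, 0 < q.2 y} := by
  unfold renyiSum
  refine continuousOn_finsetSum _ fun x _ => continuousOn_finsetSum _ fun y _ => ?_
  refine continuousOn_const.mul (ContinuousOn.rpow_const (by fun_prop) fun q hq => ?_)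
  exact Or.inl (mul_pos (hq.1 x) (hq.2 y)).ne'

lemma rpow_mul_rpow_le_renyiSum (hP : ∀ x y, 0 ≤ P x y) {qX : X → ℝ} {qY : Y → ℝ}
    (hqX : ∀ x, 0 ≤ qX x) (hqY : ∀ y, 0 ≤ qY y) (x : X) (y : Y) :
    P x y ^ α * (qX x * qY y) ^ (1 - α) ≤ renyiSum α P qX qY := by
  have hterm : ∀ x y, 0 ≤ P x y ^ α * (qX x * qY y) ^ (1 - α) := fun x y =>
    mul_nonneg (rpow_nonneg (hP x y) _) (rpow_nonneg (mul_nonneg (hqX x) (hqY y)) _)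
  exact (single_le_sum (fun y _ => hterm x y) (mem_univ y)).trans
    (single_le_sum (fun x _ => sum_nonneg fun y _ => hterm x y) (mem_univ x))

lemma rpow_mul_rpow_le_renyiSum_of_mul_le (hα : 1 ≤ α) (hP : ∀ x y, 0 ≤ P x y)
    {qX : X → ℝ} {qY : Y → ℝ} (hqX : ∀ x, 0 < qX x) (hqY : ∀ y, 0 < qY y) {ε : ℝ} {x : X}
    {y : Y} (hxy : qX x * qY y ≤ ε) :
    P x y ^ α * ε ^ (1 - α) ≤ renyiSum α P qX qY := by
  refine le_trans ?_ (rpow_mul_rpow_le_renyiSum hP (fun x => (hqX x).le) (fun y => (hqY y).le) x y)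
  exact mul_le_mul_of_nonneg_left
    (rpow_le_rpow_of_nonpos (mul_pos (hqX x) (hqY y)) hxy (by linarith)) (rpow_nonneg (hP x y) _)

lemma exists_isMinOn_renyiSum [Nonempty X] [Nonempty Y] (hα : 1 < α) (hP : ∀ x y, 0 < P x y) :
    ∃ q ∈ posSimplex X ×ˢ posSimplex Y, IsMinOn (fun q : (X → ℝ) × (Y → ℝ) => renyiSum α P q.1 q.2)
      (posSimplex X ×ˢ posSimplex Y) q := by
  set u : (X → ℝ) × (Y → ℝ) := (fun _ => (Fintype.card X : ℝ)⁻¹, fun _ => (Fintype.card Y : ℝ)⁻¹)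
  -- below `ε` in some coordinate, `renyiSum` already exceeds its value at the uniform point `u`
  obtain ⟨ε, hε, hεX, hεY, hεP⟩ : ∃ ε > 0, ε ≤ (Fintype.card X : ℝ)⁻¹ ∧
      ε ≤ (Fintype.card Y : ℝ)⁻¹ ∧ ∀ x y, renyiSum α P u.1 u.2 ≤ P x y ^ α * ε ^ (1 - α) := by
    have hsmall : ∀ c : ℝ, 0 < c → ∀ᶠ ε in 𝓝[>] (0 : ℝ), ε ≤ c := fun c hc =>
      nhdsWithin_le_nhds (eventually_le_nhds hc)
    have hlarge : ∀ᶠ ε in 𝓝[>] (0 : ℝ), ∀ x y, renyiSum α P u.1 u.2 ≤ P x y ^ α * ε ^ (1 - α) :=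
      eventually_all.2 fun x => eventually_all.2 fun y =>
        ((tendsto_rpow_neg_nhdsGT_zero (by linarith)).const_mul_atTop
          (rpow_pos_of_pos (hP x y) _)).eventually_ge_atTop _
    exact (eventually_mem_nhdsWithin.and ((hsmall _ (by positivity)).and
      ((hsmall _ (by positivity)).and hlarge))).exists
  refine IsCompact.exists_isMinOn_of_forall_le_of_notMem
    ((isCompact_truncatedSimplex X ε).prod (isCompact_truncatedSimplex Y ε))
    (Set.prod_mono (truncatedSimplex_subset_posSimplex hε) (truncatedSimplex_subset_posSimplex hε))
    (continuousOn_renyiSum.mono fun q hq => ⟨(truncatedSimplex_subset_posSimplex hε hq.1).1,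
      (truncatedSimplex_subset_posSimplex hε hq.2).1⟩)
    (x₀ := u) ⟨const_inv_card_mem_truncatedSimplex hεX, const_inv_card_mem_truncatedSimplex hεY⟩ ?_
  rintro ⟨qX, qY⟩ ⟨hqX, hqY⟩ hq
  obtain ⟨x, y, hxy⟩ : ∃ x y, qX x * qY y ≤ ε := by
    rcases not_and_or.1 hq with h | h
    · obtain ⟨x, hx⟩ := exists_lt_of_mem_posSimplex_of_notMem_truncatedSimplex hqX h
      obtain y := Classical.arbitrary Y
      exact ⟨x, y, by nlinarith [le_one_of_mem_posSimplex hqY y, hqX.1 x]⟩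
    · obtain ⟨y, hy⟩ := exists_lt_of_mem_posSimplex_of_notMem_truncatedSimplex hqY h
      obtain x := Classical.arbitrary X
      exact ⟨x, y, by nlinarith [le_one_of_mem_posSimplex hqX x, hqY.1 y]⟩
  exact (hεP x y).trans
    (rpow_mul_rpow_le_renyiSum_of_mul_le hα.le (fun x y => (hP x y).le) hqX.1 hqY.1 hxy)

lemma renyiSum_eq_sum_rpow_mul {qX : X → ℝ} {qY : Y → ℝ} (hqX : ∀ x, 0 ≤ qX x)
    (hqY : ∀ y, 0 ≤ qY y) :
    renyiSum α P qX qY = ∑ x, qX x ^ (1 - α) * ∑ y, P x y ^ α * qY y ^ (1 - α) := by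
  refine sum_congr rfl fun x _ => ?_
  rw [mul_sum]
  refine sum_congr rfl fun y _ => ?_
  rw [mul_rpow (hqX x) (hqY y)]
  ring

lemma renyiSum_swap (qX : X → ℝ) (qY : Y → ℝ) :
    renyiSum α (fun y x => P x y) qY qX = renyiSum α P qX qY := by
  rw [renyiSum, sum_comm]
  simp only [mul_comm (qY _)]
  rfl

lemma sum_rpow_mul_rpow_eq_of_isMinOn_left [Nonempty X] [Nonempty Y] (hα : 1 < α)
    (hP : ∀ x y, 0 < P x y) {qX : X → ℝ} {qY : Y → ℝ} (hqX : qX ∈ posSimplex X)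
    (hqY : qY ∈ posSimplex Y) (hmin : IsMinOn (fun v => renyiSum α P v qY) (posSimplex X) qX)
    (x : X) :
    ∑ y, P x y ^ α * qY y ^ (1 - α) = renyiSum α P qX qY * qX x ^ α := by
  have hsplit : ∀ v ∈ posSimplex X,
      renyiSum α P v qY = ∑ x, v x ^ (1 - α) * ∑ y, P x y ^ α * qY y ^ (1 - α) :=
    fun v hv => renyiSum_eq_sum_rpow_mul (fun x => (hv.1 x).le) fun y => (hqY.1 y).le
  rw [hsplit qX hqX]
  refine eq_sum_mul_rpow_of_isMinOn hα (fun x => sum_pos (fun y _ => mul_pos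
    (rpow_pos_of_pos (hP x y) _) (rpow_pos_of_pos (hqY.1 y) _)) univ_nonempty) hqX
    (isMinOn_iff.2 fun v hv =>
      (hsplit qX hqX).symm.trans_le ((isMinOn_iff.1 hmin v hv).trans_eq (hsplit v hv))) x

lemma sum_rpow_mul_rpow_eq_of_isMinOn_right [Nonempty X] [Nonempty Y] (hα : 1 < α)
    (hP : ∀ x y, 0 < P x y) {qX : X → ℝ} {qY : Y → ℝ} (hqX : qX ∈ posSimplex X)
    (hqY : qY ∈ posSimplex Y) (hmin : IsMinOn (fun v => renyiSum α P qX v) (posSimplex Y) qY)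
    (y : Y) :
    ∑ x, P x y ^ α * qX x ^ (1 - α) = renyiSum α P qX qY * qY y ^ α := by
  rw [← renyiSum_swap]
  exact sum_rpow_mul_rpow_eq_of_isMinOn_left hα (fun y x => hP x y) hqY hqX
    (by simpa only [renyiSum_swap] using hmin) y

lemma renyiSum_pos [Nonempty X] [Nonempty Y] (hP : ∀ x y, 0 < P x y) {qX : X → ℝ} {qY : Y → ℝ}
    (hqX : ∀ x, 0 < qX x) (hqY : ∀ y, 0 < qY y) : 0 < renyiSum α P qX qY :=
  sum_pos (fun x _ => sum_pos (fun y _ => mul_pos (rpow_pos_of_pos (hP x y) _)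
    (rpow_pos_of_pos (mul_pos (hqX x) (hqY y)) _)) univ_nonempty) univ_nonempty

end RenyiSum

noncomputable def lpClosedForm {X Y : Type*} [Fintype X] [Fintype Y] (α : ℝ) (pX : X → ℝ)
    (pYX : X → Y → ℝ) (r : Y → X → ℝ) : ℝ :=
  ∑ x, pX x ^ (α / (2 * α - 1)) * (∑ y, pYX x y * r y x ^ (1 - 1 / α)) ^ (α / (2 * α - 1))

section LPClosedForm

variable {X Y : Type*} [Fintype X] [Fintype Y] [Nonempty X] [Nonempty Y] {α : ℝ}
  {pX : X → ℝ} {pYX : X → Y → ℝ}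

lemma lpClosedForm_rpow_le_renyiSum (hα : 1 < α) (hpX : ∀ x, 0 ≤ pX x)
    (hpYX : ∀ x y, 0 ≤ pYX x y) {qX : X → ℝ} {qY : Y → ℝ} (hqX : qX ∈ posSimplex X)
    (hqY : qY ∈ posSimplex Y) {r : Y → X → ℝ} (hr : ∀ y, r y ∈ posSimplex X) :
    lpClosedForm α pX pYX r ^ (2 * α - 1) ≤ renyiSum α (fun x y => pX x * pYX x y) qX qY := by
  set t : X → ℝ := fun x => ∑ y, qY y * r y x
  have ht : t ∈ posSimplex X := by
    refine ⟨fun x => sum_pos (fun y _ => mul_pos (hqY.1 y) ((hr y).1 x)) univ_nonempty, ?_⟩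
    simp only [t, sum_comm (γ := X), ← mul_sum, (hr _).2, mul_one, hqY.2]
  set s : X → ℝ := fun x => ∑ y, pYX x y * r y x ^ (1 - 1 / α)
  have hs : ∀ x, 0 ≤ s x := fun x =>
    sum_nonneg fun y _ => mul_nonneg (hpYX x y) (rpow_nonneg ((hr y).1 x).le _)
  calc lpClosedForm α pX pYX r ^ (2 * α - 1)
      = (∑ x, (pX x * s x) ^ (α / (2 * α - 1))) ^ (2 * α - 1) := by
        simp only [lpClosedForm, mul_rpow (hpX _) (hs _), s]
    _ ≤ ∑ x, qX x ^ (1 - α) * ((pX x * s x) ^ α * t x ^ (1 - α)) :=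
        rpow_sum_rpow_le_sum_rpow_mul hα (fun x => mul_nonneg (hpX x) (hs x)) hqX ht
    _ ≤ ∑ x, qX x ^ (1 - α) * ∑ y, (pX x * pYX x y) ^ α * qY y ^ (1 - α) := by
        gcongr with x
        · exact rpow_nonneg (hqX.1 x).le _
        · simp only [s, t, mul_sum, ← mul_assoc]
          exact rpow_sum_mul_rpow_mul_rpow_sum_le hα (fun y => mul_nonneg (hpX x) (hpYX x y))
            hqY.1 fun y => (hr y).1 x
    _ = renyiSum α (fun x y => pX x * pYX x y) qX qY :=
        (renyiSum_eq_sum_rpow_mul (fun x => (hqX.1 x).le) fun y => (hqY.1 y).le).symm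

lemma mul_log_lpClosedForm_le (hα : 1 < α) (hpX : ∀ x, 0 < pX x) (hpYX : ∀ x y, 0 < pYX x y)
    {qX : X → ℝ} {qY : Y → ℝ} (hqX : qX ∈ posSimplex X) (hqY : qY ∈ posSimplex Y)
    {r : Y → X → ℝ} (hr : ∀ y, r y ∈ posSimplex X) :
    (2 * α - 1) / (α - 1) * log (lpClosedForm α pX pYX r)
      ≤ 1 / (α - 1) * log (renyiSum α (fun x y => pX x * pYX x y) qX qY) := by
  have hT : 0 < lpClosedForm α pX pYX r := sum_pos (fun x _ => mul_pos (rpow_pos_of_pos (hpX x) _)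
    (rpow_pos_of_pos (sum_pos (fun y _ => mul_pos (hpYX x y) (rpow_pos_of_pos ((hr y).1 x) _))
      univ_nonempty) _)) univ_nonempty
  have hle := log_le_log (rpow_pos_of_pos hT _) (lpClosedForm_rpow_le_renyiSum hα
    (fun x => (hpX x).le) (fun x y => (hpYX x y).le) hqX hqY hr)
  rw [log_rpow hT] at hle
  rw [div_mul_eq_mul_div, one_div_mul_eq_div]
  exact div_le_div_of_nonneg_right hle (by linarith)

end LPClosedForm

noncomputable def tiltedReverseChannel {X Y : Type*} [Fintype X] [Fintype Y] (α : ℝ)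
    (P : X → Y → ℝ) (qX : X → ℝ) (qY : Y → ℝ) : Y → X → ℝ :=
  fun y x => P x y ^ α * qX x ^ (1 - α) / (renyiSum α P qX qY * qY y ^ α)

section Tilted

variable {X Y : Type*} [Fintype X] [Fintype Y] {α : ℝ} {P : X → Y → ℝ} {qX : X → ℝ} {qY : Y → ℝ}

lemma tiltedReverseChannel_mem_posSimplex [Nonempty X] [Nonempty Y] (hP : ∀ x y, 0 < P x y)
    (hqX : ∀ x, 0 < qX x) (hqY : ∀ y, 0 < qY y)
    (hcol : ∀ y, ∑ x, P x y ^ α * qX x ^ (1 - α) = renyiSum α P qX qY * qY y ^ α) (y : Y) :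
    tiltedReverseChannel α P qX qY y ∈ posSimplex X := by
  have hden : 0 < renyiSum α P qX qY * qY y ^ α :=
    mul_pos (renyiSum_pos hP hqX hqY) (rpow_pos_of_pos (hqY y) _)
  refine ⟨fun x => div_pos (mul_pos (rpow_pos_of_pos (hP x y) _) (rpow_pos_of_pos (hqX x) _)) hden,
    ?_⟩
  simp only [tiltedReverseChannel]
  rw [← sum_div, hcol y, div_self hden.ne']

lemma lpClosedForm_tiltedReverseChannel [Nonempty X] [Nonempty Y] (hα : 1 < α) {pX : X → ℝ}
    {pYX : X → Y → ℝ} (hpX : ∀ x, 0 < pX x) (hpYX : ∀ x y, 0 < pYX x y)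
    (hqX : qX ∈ posSimplex X) (hqY : ∀ y, 0 < qY y)
    (hrow : ∀ x, ∑ y, (pX x * pYX x y) ^ α * qY y ^ (1 - α)
      = renyiSum α (fun x y => pX x * pYX x y) qX qY * qX x ^ α) :
    lpClosedForm α pX pYX (tiltedReverseChannel α (fun x y => pX x * pYX x y) qX qY)
      = renyiSum α (fun x y => pX x * pYX x y) qX qY ^ (1 / (2 * α - 1)) := by
  set F := renyiSum α (fun x y => pX x * pYX x y) qX qY
  have hF : 0 < F := renyiSum_pos (fun x y => mul_pos (hpX x) (hpYX x y)) hqX.1 hqY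
  have hα0 : α ≠ 0 := by positivity
  have h2α : 2 * α - 1 ≠ 0 := by linarith
  have hterm : ∀ x y, pYX x y * tiltedReverseChannel α (fun x y => pX x * pYX x y) qX qY y x
      ^ (1 - 1 / α) = (pX x * pYX x y) ^ α * qY y ^ (1 - α)
        * (qX x ^ ((1 - α) * (1 - 1 / α)) * F ^ (-(1 - 1 / α)) / pX x) := by
    intro x y
    have := hpX x; have := hpYX x y; have := hqX.1 x; have := hqY y
    rw [show tiltedReverseChannel α (fun x y => pX x * pYX x y) qX qY y x
      = (pX x * pYX x y) ^ α * qX x ^ (1 - α) / (F * qY y ^ α) from rfl]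
    refine log_injOn_pos (Set.mem_Ioi.2 (by positivity)) (Set.mem_Ioi.2 (by positivity)) ?_
    simp (disch := positivity) only [log_mul, log_div, log_rpow]
    field_simp
    ring
  have hx : ∀ x, pX x ^ (α / (2 * α - 1)) * (∑ y, pYX x y
      * tiltedReverseChannel α (fun x y => pX x * pYX x y) qX qY y x ^ (1 - 1 / α))
        ^ (α / (2 * α - 1)) = F ^ (1 / (2 * α - 1)) * qX x := by
    intro x
    have := hpX x; have := hqX.1 x
    rw [sum_congr rfl fun y _ => hterm x y, ← sum_mul, hrow x]
    refine log_injOn_pos (Set.mem_Ioi.2 (by positivity)) (Set.mem_Ioi.2 (by positivity)) ?_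
    simp (disch := positivity) only [log_mul, log_div, log_rpow]
    field_simp
    linear_combination log (qX x) * mul_inv_cancel₀ h2α
  rw [lpClosedForm, sum_congr rfl fun x _ => hx x, ← mul_sum, hqX.2, mul_one]

end Tilted

section LPMI

variable {X Y : Type*} [Fintype X] [Fintype Y] {α : ℝ}

lemma renyiDE_prod_of_pos {pX : X → ℝ} {pYX : X → Y → ℝ} {qX : X → ℝ} {qY : Y → ℝ}
    (hqX : ∀ x, 0 < qX x) (hqY : ∀ y, 0 < qY y) :
    renyiDE α (fun z : X × Y => pX z.1 * pYX z.1 z.2) (fun z => qX z.1 * qY z.2)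
      = ((1 / (α - 1) * log (renyiSum α (fun x y => pX x * pYX x y) qX qY) : ℝ) : EReal) := by
  rw [renyiDE, if_neg fun h => h.2.elim fun z hz => (mul_pos (hqX z.1) (hqY z.2)).ne' hz.2,
    renyiSum, ← Fintype.sum_prod_type']

lemma renyiDE_prod_eq_top (hα : 1 < α) {pX : X → ℝ} {pYX : X → Y → ℝ} {qX : X → ℝ}
    {qY : Y → ℝ} {x : X} {y : Y} (hP : pX x * pYX x y ≠ 0) (hq : qX x * qY y = 0) :
    renyiDE α (fun z : X × Y => pX z.1 * pYX z.1 z.2) (fun z => qX z.1 * qY z.2) = ⊤ :=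
  if_pos ⟨hα, (x, y), hP, hq⟩

lemma lpMI_eq_of_isMinOn [Nonempty X] [Nonempty Y] (hα : 1 < α) {pX : X → ℝ}
    {pYX : X → Y → ℝ} (hP : ∀ x y, 0 < pX x * pYX x y) {q : (X → ℝ) × (Y → ℝ)}
    (hq : q ∈ posSimplex X ×ˢ posSimplex Y)
    (hmin : IsMinOn (fun q => renyiSum α (fun x y => pX x * pYX x y) q.1 q.2)
      (posSimplex X ×ˢ posSimplex Y) q) :
    lpMI α pX pYX = ((1 / (α - 1) * log (renyiSum α (fun x y => pX x * pYX x y) q.1 q.2) : ℝ) :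
      EReal) := by
  refine le_antisymm (sInf_le ⟨q.1, q.2, ⟨fun x => (hq.1.1 x).le, hq.1.2⟩,
    ⟨fun y => (hq.2.1 y).le, hq.2.2⟩, (renyiDE_prod_of_pos hq.1.1 hq.2.1).symm⟩) (le_sInf ?_)
  rintro v ⟨qX, qY, hqX, hqY, rfl⟩
  by_cases hpos : (∀ x, 0 < qX x) ∧ ∀ y, 0 < qY y
  · rw [renyiDE_prod_of_pos hpos.1 hpos.2, EReal.coe_le_coe_iff]
    have hα1 : 0 < 1 / (α - 1) := one_div_pos.2 (by linarith)
    gcongr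
    · exact renyiSum_pos hP hq.1.1 hq.2.1
    · exact isMinOn_iff.1 hmin (qX, qY) ⟨⟨hpos.1, hqX.2⟩, ⟨hpos.2, hqY.2⟩⟩
  · obtain ⟨x, y, hxy⟩ : ∃ x y, qX x * qY y = 0 := by
      rw [not_and_or] at hpos
      push Not at hpos
      rcases hpos with ⟨x, hx⟩ | ⟨y, hy⟩
      · exact ⟨x, Classical.arbitrary Y, by rw [le_antisymm hx (hqX.1 x), zero_mul]⟩
      · exact ⟨Classical.arbitrary X, y, by rw [le_antisymm hy (hqY.1 y), mul_zero]⟩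
    rw [renyiDE_prod_eq_top hα (hP x y).ne' hxy]
    exact le_top

end LPMI

theorem lpMI_eq_sup_closed_form_general {X Y : Type*} [Fintype X] [Fintype Y] [Nonempty X] [Nonempty Y]
    (α : ℝ) (hα : 1 < α)
    (pX : X → ℝ) (hpXpos : ∀ x, 0 < pX x)
    (pYX : X → Y → ℝ) (hpYXpos : ∀ x y, 0 < pYX x y) :
    IsGreatest
      {v : EReal | ∃ r : Y → X → ℝ, (∀ y, IsPMF (r y)) ∧ (∀ y x, 0 < r y x) ∧
        v = ((((2 * α - 1) / (α - 1)) * Real.log (∑ x, pX x ^ (α / (2 * α - 1)) *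
              (∑ y, pYX x y * r y x ^ (1 - 1 / α)) ^ (α / (2 * α - 1))) : ℝ) : EReal)}
      (lpMI α pX pYX) := by
  have hP : ∀ x y, 0 < pX x * pYX x y := fun x y => mul_pos (hpXpos x) (hpYXpos x y)
  obtain ⟨q, hq, hmin⟩ := exists_isMinOn_renyiSum hα hP
  have hF := renyiSum_pos (α := α) hP hq.1.1 hq.2.1
  have hrow := sum_rpow_mul_rpow_eq_of_isMinOn_left hα hP hq.1 hq.2
    (hmin.comp_mapsTo (g := fun v => (v, q.2)) (fun _ hv => ⟨hv, hq.2⟩) rfl)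
  have hcol := sum_rpow_mul_rpow_eq_of_isMinOn_right hα hP hq.1 hq.2
    (hmin.comp_mapsTo (g := fun v => (q.1, v)) (fun _ hv => ⟨hq.1, hv⟩) rfl)
  have hr := tiltedReverseChannel_mem_posSimplex hP hq.1.1 hq.2.1 hcol
  rw [lpMI_eq_of_isMinOn hα hP hq hmin]
  refine ⟨⟨_, fun y => ⟨fun x => ((hr y).1 x).le, (hr y).2⟩, fun y => (hr y).1, ?_⟩, ?_⟩
  · change _ = ((((2 * α - 1) / (α - 1)) * log (lpClosedForm α pX pYX _) : ℝ) : EReal)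
    rw [lpClosedForm_tiltedReverseChannel hα hpXpos hpYXpos hq.1 hq.2.1 hrow, log_rpow hF,
      ← mul_assoc, div_mul_div_comm, mul_one, div_mul_cancel_right₀ (by linarith), one_div]
  · rintro v ⟨r, hrPMF, hrpos, rfl⟩
    exact EReal.coe_le_coe_iff.2 (mul_log_lpClosedForm_le hα hpXpos hpYXpos hq.1 hq.2
      fun y => ⟨hrpos y, (hrPMF y).2⟩)

/-- For `α > 1`, the Lapidoth--Pfister mutual information of order `α` is the supremum,
over strictly positive reverse channels `r_{X|Y}`, of
`((2α−1)/(α−1)) log Σ_x p_X(x)^{α/(2α−1)} (Σ_y p_{Y|X}(y|x) r(x|y)^{1−1/α})^{α/(2α−1)}`,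
and the supremum is attained. -/
theorem lpMI_eq_sup_closed_form {X Y : Type*} [Fintype X] [Fintype Y] [Nonempty X] [Nonempty Y]
    (α : ℝ) (hα : 1 < α)
    (pX : X → ℝ) (hpX : IsPMF pX) (hpXpos : ∀ x, 0 < pX x)
    (pYX : X → Y → ℝ) (hpYX : ∀ x, IsPMF (pYX x)) (hpYXpos : ∀ x y, 0 < pYX x y) :
    IsGreatest
      {v : EReal | ∃ r : Y → X → ℝ, (∀ y, IsPMF (r y)) ∧ (∀ y x, 0 < r y x) ∧
        v = ((((2 * α - 1) / (α - 1)) * Real.log (∑ x, pX x ^ (α / (2 * α - 1)) *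
              (∑ y, pYX x y * r y x ^ (1 - 1 / α)) ^ (α / (2 * α - 1))) : ℝ) : EReal)}
      (lpMI α pX pYX) :=
  lpMI_eq_sup_closed_form_general α hα pX hpXpos pYX hpYXpos
end

section
/- Let α ∈ (0,1), let p_X be a strictly positive probability distribution on 𝒳 and p_{Y|X} a channel with p_{Y|X}(y|x) > 0 for all x, y. (1) For any strictly positive probability distribution q̃_{X,Y} on 𝒳×𝒴, the map q_Y ↦ F_α^{LP}(q̃_{X,Y}, q_Y) over probability distributions q_Y on 𝒴 is minimized by the Y-marginal q*_Y(y) := Σ_x q̃_{X,Y}(x,y). (2) For any strictly positive probability distribution q_Y on 𝒴, the map q̃_{X,Y} ↦ F_α^{LP}(q̃_{X,Y}, q_Y) over strictly positive probability distributions q̃_{X,Y} on 𝒳×𝒴 is minimized by q̃*_{X,Y}(x,y) := q̄_X(x) q̄_{Y|X}(y|x), where q̄_{Y|X}(y|x) := p_{Y|X}(y|x)^α q_Y(y)^{1−α} / Σ_{y'} p_{Y|X}(y'|x)^α q_Y(y')^{1−α} and q̄_X(x) := p_X(x) ( Σ_y p_{Y|X}(y|x)^α q_Y(y)^{1−α}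 )^{1/α} / Σ_{x'} p_X(x') ( Σ_y p_{Y|X}(y|x')^α q_Y(y)^{1−α} )^{1/α}. -/
/-- Kullback--Leibler divergence (natural log), real-valued. -/
noncomputable def klD {Z : Type*} [Fintype Z] (p q : Z → ℝ) : ℝ :=
  ∑ z, p z * Real.log (p z / q z)

/-- Kullback--Leibler divergence valued in `ℝ ∪ {+∞}` (as `EReal`): it is `⊤` when `q`
vanishes somewhere on the support of `p`. -/
noncomputable def klDE {Z : Type*} [Fintype Z] (p q : Z → ℝ) : EReal :=
  if ∃ z, p z ≠ 0 ∧ q z = 0 then ⊤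
  else ((∑ z, p z * Real.log (p z / q z) : ℝ) : EReal)

/-- `F_α^{LP}(q̃_{X,Y}, q_Y) = (α/(1−α)) D(q̃_{X,Y} ‖ q̃_X p_{Y|X})
  + D(q̃_{X,Y} ‖ q̃_X q_Y) + (α/(1−α)) D(q̃_X ‖ p_X)`, valued in `EReal`. -/
noncomputable def FLP {X Y : Type*} [Fintype X] [Fintype Y]
    (α : ℝ) (pX : X → ℝ) (pYX : X → Y → ℝ) (qt : X × Y → ℝ) (qY : Y → ℝ) : EReal :=
  (((α / (1 - α)) * klD qt (fun z : X × Y => (∑ y, qt (z.1, y)) * pYX z.1 z.2) : ℝ) : EReal)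
  + klDE qt (fun z : X × Y => (∑ y, qt (z.1, y)) * qY z.2)
  + (((α / (1 - α)) * klD (fun x => ∑ y, qt (x, y)) pX : ℝ) : EReal)

/-!
For fixed `q̃_{X,Y}` only the middle divergence depends on `q_Y`, and by the chain rule
`D(q̃ ‖ q̃_X q_Y) = D(q̃ ‖ q̃_X q̃_Y) + D(q̃_Y ‖ q_Y)`, so Gibbs' inequality settles (1).

For (2), a pointwise computation of logarithms gives
`(1-α) F(q̃) = D(q̃ ‖ q̃_X q̄_{Y|X}) + α D(q̃_X ‖ q̄_X) - α log C`, where `C` is the normalizer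
of `q̄_X`. Both divergences are nonnegative and vanish at `q̃ = q̄_X q̄_{Y|X}`.
-/

open Finset Real

section Divergence

variable {Z : Type*} [Fintype Z]

theorem sub_le_mul_log_div {p q : ℝ} (hp : 0 ≤ p) (hq : 0 < q) : p - q ≤ p * log (p / q) := by
  rcases hp.eq_or_lt with rfl | hp
  · simpa using hq.le
  · have h := one_sub_inv_le_log_of_pos (div_pos hp hq)
    rw [inv_div] at h
    calc p - q = p * (1 - q / p) := by field_simp
      _ ≤ p * log (p / q) := mul_le_mul_of_nonneg_left h hp.le

theorem klD_nonneg {p q : Z → ℝ} (hp : ∀ z, 0 ≤ p z) (hq : ∀ z, 0 < q z)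
    (hsum : ∑ z, q z ≤ ∑ z, p z) : 0 ≤ klD p q := by
  have h := sum_le_sum fun z (_ : z ∈ univ) => sub_le_mul_log_div (hp z) (hq z)
  rw [sum_sub_distrib] at h
  rw [klD]
  linarith

theorem klD_self (p : Z → ℝ) : klD p p = 0 :=
  sum_eq_zero fun z _ => by rcases eq_or_ne (p z) 0 with h | h <;> simp [h]

theorem klDE_eq_coe_klD {p q : Z → ℝ} (h : ∀ z, p z ≠ 0 → q z ≠ 0) :
    klDE p q = klD p q := by
  rw [klDE, if_neg fun ⟨z, hp, hq⟩ => h z hp hq, klD]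

theorem klDE_eq_top {p q : Z → ℝ} (h : ∃ z, p z ≠ 0 ∧ q z = 0) : klDE p q = ⊤ :=
  if_pos h

end Divergence

section Marginal

variable {X Y : Type*}

theorem fst_marginal_pos [Fintype Y] {r : X × Y → ℝ} (hr : ∀ z, 0 < r z) (z : X × Y) :
    0 < ∑ y, r (z.1, y) :=
  (hr z).trans_le (single_le_sum (f := fun y => r (z.1, y)) (fun _ _ => (hr _).le) (mem_univ z.2))

theorem snd_marginal_pos [Fintype X] {r : X × Y → ℝ} (hr : ∀ z, 0 < r z) (z : X × Y) :
    0 < ∑ x, r (x, z.2) :=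
  (hr z).trans_le (single_le_sum (f := fun x => r (x, z.2)) (fun _ _ => (hr _).le) (mem_univ z.1))

variable [Fintype X] [Fintype Y]

theorem klD_fst_marginal (r : X × Y → ℝ) (f : X → ℝ) :
    klD (fun x => ∑ y, r (x, y)) f = ∑ z, r z * log ((∑ y, r (z.1, y)) / f z.1) := by
  rw [klD, Fintype.sum_prod_type]
  simp_rw [sum_mul]

theorem klD_snd_marginal (r : X × Y → ℝ) (g : Y → ℝ) :
    klD (fun y => ∑ x, r (x, y)) g = ∑ z, r z * log ((∑ x, r (x, z.2)) / g z.2) := by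
  rw [klD, Fintype.sum_prod_type_right]
  simp_rw [sum_mul]

theorem sum_mul_channel (m : X → ℝ) {W : X → Y → ℝ} (hW : ∀ x, ∑ y, W x y = 1) :
    ∑ z : X × Y, m z.1 * W z.1 z.2 = ∑ x, m x := by
  rw [Fintype.sum_prod_type]
  simp_rw [← mul_sum, hW, mul_one]

theorem klD_mul_marginal {r : X × Y → ℝ} (hr : ∀ z, 0 < r z) {q : Y → ℝ} (hq : ∀ y, 0 < q y) :
    klD r (fun z => (∑ y, r (z.1, y)) * q z.2)
      = klD r (fun z => (∑ y, r (z.1, y)) * ∑ x, r (x, z.2)) + klD (fun y => ∑ x, r (x, y)) q := by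
  rw [klD_snd_marginal, klD, klD, ← sum_add_distrib]
  refine sum_congr rfl fun z _ => ?_
  have hm := fst_marginal_pos hr z
  have hn := snd_marginal_pos hr z
  rw [← mul_add, ← log_mul (div_pos (hr z) (mul_pos hm hn)).ne' (div_pos hn (hq z.2)).ne']
  congr 2
  field_simp

theorem klDE_marginal_le [Nonempty X] {r : X × Y → ℝ} (hr : ∀ z, 0 < r z) (hr1 : ∑ z, r z = 1)
    {q : Y → ℝ} (hq : IsPMF q) :
    klDE r (fun z => (∑ y, r (z.1, y)) * ∑ x, r (x, z.2))
      ≤ klDE r (fun z => (∑ y, r (z.1, y)) * q z.2) := by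
  by_cases hq0 : ∃ y, q y = 0
  · obtain ⟨y, hy⟩ := hq0
    exact le_top.trans_eq (klDE_eq_top ⟨(Classical.arbitrary X, y), (hr _).ne', by simp [hy]⟩).symm
  push Not at hq0
  have hqpos : ∀ y, 0 < q y := fun y => (hq.1 y).lt_of_ne' (hq0 y)
  rw [klDE_eq_coe_klD fun z _ => (mul_pos (fst_marginal_pos hr z) (snd_marginal_pos hr z)).ne',
    klDE_eq_coe_klD fun z _ => (mul_pos (fst_marginal_pos hr z) (hqpos z.2)).ne',
    klD_mul_marginal hr hqpos]
  have hgibbs : 0 ≤ klD (fun y => ∑ x, r (x, y)) q :=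
    klD_nonneg (fun y => sum_nonneg fun x _ => (hr _).le) hqpos
      (by rw [hq.2, ← Fintype.sum_prod_type_right, hr1])
  exact_mod_cast le_add_of_nonneg_right hgibbs

end Marginal

section RealValued

variable {X Y : Type*} [Fintype X] [Fintype Y]

noncomputable def flpReal (α : ℝ) (pX : X → ℝ) (pYX : X → Y → ℝ) (qt : X × Y → ℝ) (qY : Y → ℝ) :
    ℝ :=
  α / (1 - α) * klD qt (fun z => (∑ y, qt (z.1, y)) * pYX z.1 z.2)
    + klD qt (fun z => (∑ y, qt (z.1, y)) * qY z.2)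
    + α / (1 - α) * klD (fun x => ∑ y, qt (x, y)) pX

theorem FLP_eq_coe_flpReal {α : ℝ} {pX : X → ℝ} {pYX : X → Y → ℝ} {qt : X × Y → ℝ}
    (hqt : ∀ z, 0 < qt z) {qY : Y → ℝ} (hqY : ∀ y, 0 < qY y) :
    FLP α pX pYX qt qY = flpReal α pX pYX qt qY := by
  rw [FLP, klDE_eq_coe_klD fun z _ => (mul_pos (fst_marginal_pos hqt z) (hqY z.2)).ne', flpReal]
  push_cast
  rfl

end RealValued

/- The summand of `(1-α) F` at `(x, y)`, with `a = q̃(x,y)`, `m = q̃_X(x)`, `p = p_{Y|X}(y|x)`,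
`q = q_Y(y)`, `s = p_X(x)`, `S = tiltedPartition x` and `C = tiltedNormalizer`. -/
theorem log_tilted_identity {α a m p q s S C : ℝ} (hα : α ≠ 0) (ha : 0 < a) (hm : 0 < m)
    (hp : 0 < p) (hq : 0 < q) (hs : 0 < s) (hS : 0 < S) (hC : 0 < C) :
    α * log (a / (m * p)) + (1 - α) * log (a / (m * q)) + α * log (m / s)
      = log (a / (m * (p ^ α * q ^ (1 - α) / S))) + α * log (m / (s * S ^ (1 / α) / C))
        - α * log C := by
  have hG : 0 < p ^ α * q ^ (1 - α) := by positivity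
  rw [log_div ha.ne' (by positivity), log_div ha.ne' (by positivity),
    log_div ha.ne' (by positivity), log_div hm.ne' hs.ne', log_div hm.ne' (by positivity),
    log_mul hm.ne' hp.ne', log_mul hm.ne' hq.ne', log_mul hm.ne' (by positivity),
    log_div hG.ne' hS.ne', log_mul (by positivity) (by positivity),
    log_div (by positivity) hC.ne', log_mul hs.ne' (by positivity),
    log_rpow hp, log_rpow hq, log_rpow hS]
  field_simp
  ring

section Tilted

variable {X Y : Type*} [Fintype Y] (α : ℝ) (pYX : X → Y → ℝ) (qY : Y → ℝ)

noncomputable def tiltedPartition (x : X) : ℝ :=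
  ∑ y, pYX x y ^ α * qY y ^ (1 - α)

noncomputable def tiltedChannel (x : X) (y : Y) : ℝ :=
  pYX x y ^ α * qY y ^ (1 - α) / tiltedPartition α pYX qY x

section ChannelPositivity

variable {pYX qY} [Nonempty Y] (hpYX : ∀ x y, 0 < pYX x y) (hqY : ∀ y, 0 < qY y)
include hpYX hqY

theorem tiltedPartition_pos (x : X) : 0 < tiltedPartition α pYX qY x :=
  sum_pos (fun y _ => mul_pos (rpow_pos_of_pos (hpYX x y) _) (rpow_pos_of_pos (hqY y) _))
    univ_nonempty

theorem tiltedChannel_pos (x : X) (y : Y) : 0 < tiltedChannel α pYX qY x y :=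
  div_pos (mul_pos (rpow_pos_of_pos (hpYX x y) _) (rpow_pos_of_pos (hqY y) _))
    (tiltedPartition_pos α hpYX hqY x)

theorem sum_tiltedChannel (x : X) : ∑ y, tiltedChannel α pYX qY x y = 1 := by
  unfold tiltedChannel
  rw [← sum_div]
  exact div_self (tiltedPartition_pos α hpYX hqY x).ne'

end ChannelPositivity

variable [Fintype X] (pX : X → ℝ)

noncomputable def tiltedNormalizer : ℝ :=
  ∑ x, pX x * tiltedPartition α pYX qY x ^ (1 / α)

noncomputable def tiltedMarginal (x : X) : ℝ :=
  pX x * tiltedPartition α pYX qY x ^ (1 / α) / tiltedNormalizer α pYX qY pX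

noncomputable def tiltedJoint (z : X × Y) : ℝ :=
  tiltedMarginal α pYX qY pX z.1 * tiltedChannel α pYX qY z.1 z.2

section MarginalPositivity

variable {pYX qY pX} [Nonempty X] [Nonempty Y] (hpYX : ∀ x y, 0 < pYX x y)
  (hqY : ∀ y, 0 < qY y) (hpX : ∀ x, 0 < pX x)
include hpYX hqY hpX

theorem tiltedNormalizer_pos : 0 < tiltedNormalizer α pYX qY pX :=
  sum_pos (fun x _ => mul_pos (hpX x) (rpow_pos_of_pos (tiltedPartition_pos α hpYX hqY x) _))
    univ_nonempty

theorem tiltedMarginal_pos (x : X) : 0 < tiltedMarginal α pYX qY pX x :=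
  div_pos (mul_pos (hpX x) (rpow_pos_of_pos (tiltedPartition_pos α hpYX hqY x) _))
    (tiltedNormalizer_pos α hpYX hqY hpX)

theorem sum_tiltedMarginal : ∑ x, tiltedMarginal α pYX qY pX x = 1 := by
  unfold tiltedMarginal
  rw [← sum_div]
  exact div_self (tiltedNormalizer_pos α hpYX hqY hpX).ne'

theorem tiltedJoint_pos (z : X × Y) : 0 < tiltedJoint α pYX qY pX z :=
  mul_pos (tiltedMarginal_pos α hpYX hqY hpX z.1) (tiltedChannel_pos α hpYX hqY z.1 z.2)

end MarginalPositivity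

variable {α pYX qY pX}

theorem one_sub_mul_flpReal [Nonempty X] [Nonempty Y] (hα : α ≠ 0) (hα1 : α ≠ 1)
    (hpX : ∀ x, 0 < pX x) (hpYX : ∀ x y, 0 < pYX x y) (hqY : ∀ y, 0 < qY y)
    {r : X × Y → ℝ} (hr : ∀ z, 0 < r z) (hr1 : ∑ z, r z = 1) :
    (1 - α) * flpReal α pX pYX r qY
      = klD r (fun z => (∑ y, r (z.1, y)) * tiltedChannel α pYX qY z.1 z.2)
        + α * klD (fun x => ∑ y, r (x, y)) (tiltedMarginal α pYX qY pX)
        - α * log (tiltedNormalizer α pYX qY pX) := by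
  have hc : α / (1 - α) * (1 - α) = α := div_mul_cancel₀ α (sub_ne_zero.2 (Ne.symm hα1))
  have hconst : α * log (tiltedNormalizer α pYX qY pX)
      = ∑ z, r z * (α * log (tiltedNormalizer α pYX qY pX)) := by
    rw [← sum_mul, hr1, one_mul]
  rw [flpReal, hconst, klD_fst_marginal, klD_fst_marginal, klD, klD, klD]
  simp only [mul_sum, ← sum_add_distrib, ← sum_sub_distrib]
  refine sum_congr rfl fun z _ => ?_
  have h := log_tilted_identity hα (hr z) (fst_marginal_pos hr z) (hpYX z.1 z.2) (hqY z.2)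
    (hpX z.1) (tiltedPartition_pos α hpYX hqY z.1) (tiltedNormalizer_pos α hpYX hqY hpX)
  rw [tiltedChannel, tiltedMarginal]
  linear_combination r z * h + r z * (log (r z / ((∑ y, r (z.1, y)) * pYX z.1 z.2))
    + log ((∑ y, r (z.1, y)) / pX z.1)) * hc

theorem flpReal_tiltedJoint_le [Nonempty X] [Nonempty Y] (hα : 0 < α) (hα1 : α < 1)
    (hpX : ∀ x, 0 < pX x) (hpYX : ∀ x y, 0 < pYX x y) (hqY : ∀ y, 0 < qY y)
    {r : X × Y → ℝ} (hr : ∀ z, 0 < r z) (hr1 : ∑ z, r z = 1) :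
    flpReal α pX pYX (tiltedJoint α pYX qY pX) qY ≤ flpReal α pX pYX r qY := by
  have hW := sum_tiltedChannel α hpYX hqY
  have hB := sum_tiltedMarginal α hpYX hqY hpX
  have ht_marginal : ∀ x, ∑ y, tiltedJoint α pYX qY pX (x, y) = tiltedMarginal α pYX qY pX x :=
    fun x => by simp only [tiltedJoint, ← mul_sum, hW, mul_one]
  have ht1 : ∑ z, tiltedJoint α pYX qY pX z = 1 := (sum_mul_channel _ hW).trans hB
  have hmin := one_sub_mul_flpReal hα.ne' hα1.ne hpX hpYX hqY (tiltedJoint_pos α hpYX hqY hpX) ht1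
  have ht_factor :
      (fun z : X × Y => tiltedMarginal α pYX qY pX z.1 * tiltedChannel α pYX qY z.1 z.2)
        = tiltedJoint α pYX qY pX := rfl
  simp only [ht_marginal, ht_factor, klD_self] at hmin
  have hr_marginal : ∑ x, ∑ y, r (x, y) = 1 := (Fintype.sum_prod_type r).symm.trans hr1
  have hchannel : 0 ≤ klD r (fun z => (∑ y, r (z.1, y)) * tiltedChannel α pYX qY z.1 z.2) :=
    klD_nonneg (fun z => (hr z).le)
      (fun z => mul_pos (fst_marginal_pos hr z) (tiltedChannel_pos α hpYX hqY z.1 z.2))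
      (by rw [sum_mul_channel (fun x => ∑ y, r (x, y)) hW, hr_marginal, hr1])
  have hmarginal : 0 ≤ klD (fun x => ∑ y, r (x, y)) (tiltedMarginal α pYX qY pX) :=
    klD_nonneg (fun x => sum_nonneg fun y _ => (hr _).le) (tiltedMarginal_pos α hpYX hqY hpX)
      (by rw [hB, hr_marginal])
  refine le_of_mul_le_mul_left ?_ (sub_pos.2 hα1)
  rw [hmin, one_sub_mul_flpReal hα.ne' hα1.ne hpX hpYX hqY hr hr1]
  linarith [mul_nonneg hα.le hmarginal]

end Tilted

theorem FLP_min_updates_general {X Y : Type*} [Fintype X] [Fintype Y] [Nonempty X] [Nonempty Y]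
    (α : ℝ) (hα : 0 < α ∧ α < 1)
    (pX : X → ℝ) (hpXpos : ∀ x, 0 < pX x)
    (pYX : X → Y → ℝ) (hpYXpos : ∀ x y, 0 < pYX x y) :
    (∀ qt : X × Y → ℝ, IsPMF qt → (∀ z, 0 < qt z) →
      ∀ qY : Y → ℝ, IsPMF qY →
        FLP α pX pYX qt (fun y => ∑ x, qt (x, y)) ≤ FLP α pX pYX qt qY) ∧
    (∀ qY : Y → ℝ, IsPMF qY → (∀ y, 0 < qY y) →
      ∀ qt : X × Y → ℝ, IsPMF qt → (∀ z, 0 < qt z) →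
        FLP α pX pYX
          (fun z : X × Y =>
            (pX z.1 * (∑ y, pYX z.1 y ^ α * qY y ^ (1 - α)) ^ (1 / α) /
              ∑ x', pX x' * (∑ y, pYX x' y ^ α * qY y ^ (1 - α)) ^ (1 / α)) *
            (pYX z.1 z.2 ^ α * qY z.2 ^ (1 - α) /
              ∑ y', pYX z.1 y' ^ α * qY y' ^ (1 - α))) qY ≤
        FLP α pX pYX qt qY) := by
  refine ⟨fun qt hqt hqtpos qY hqY => ?_, fun qY _ hqYpos qt hqt hqtpos => ?_⟩
  · exact add_le_add_left (add_le_add_right (klDE_marginal_le hqtpos hqt.2 hqY) _) _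
  · change FLP α pX pYX (tiltedJoint α pYX qY pX) qY ≤ _
    rw [FLP_eq_coe_flpReal (tiltedJoint_pos α hpYXpos hqYpos hpXpos) hqYpos,
      FLP_eq_coe_flpReal hqtpos hqYpos]
    exact_mod_cast flpReal_tiltedJoint_le hα.1 hα.2 hpXpos hpYXpos hqYpos hqtpos hqt.2

/-- Alternating-minimization updating formulae for `F_α^{LP}` when `α ∈ (0,1)`:
(1) for fixed strictly positive `q̃_{X,Y}`, the minimizing `q_Y` is the `Y`-marginal of
`q̃_{X,Y}`; (2) for fixed strictly positive `q_Y`, the minimizing strictly positive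
`q̃_{X,Y}` is the product `q̄_X q̄_{Y|X}` given by the stated tilted formulae. -/
theorem FLP_min_updates {X Y : Type*} [Fintype X] [Fintype Y] [Nonempty X] [Nonempty Y]
    (α : ℝ) (hα : 0 < α ∧ α < 1)
    (pX : X → ℝ) (hpX : IsPMF pX) (hpXpos : ∀ x, 0 < pX x)
    (pYX : X → Y → ℝ) (hpYX : ∀ x, IsPMF (pYX x)) (hpYXpos : ∀ x y, 0 < pYX x y) :
    (∀ qt : X × Y → ℝ, IsPMF qt → (∀ z, 0 < qt z) →
      ∀ qY : Y → ℝ, IsPMF qY →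
        FLP α pX pYX qt (fun y => ∑ x, qt (x, y)) ≤ FLP α pX pYX qt qY) ∧
    (∀ qY : Y → ℝ, IsPMF qY → (∀ y, 0 < qY y) →
      ∀ qt : X × Y → ℝ, IsPMF qt → (∀ z, 0 < qt z) →
        FLP α pX pYX
          (fun z : X × Y =>
            (pX z.1 * (∑ y, pYX z.1 y ^ α * qY y ^ (1 - α)) ^ (1 / α) /
              ∑ x', pX x' * (∑ y, pYX x' y ^ α * qY y ^ (1 - α)) ^ (1 / α)) *
            (pYX z.1 z.2 ^ α * qY z.2 ^ (1 - α) /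
              ∑ y', pYX z.1 y' ^ α * qY y' ^ (1 - α))) qY ≤
        FLP α pX pYX qt qY) :=
  FLP_min_updates_general α hα pX hpXpos pYX hpYXpos
end
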